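/- arXiv:2510.23433 — 3 statements merged into one kernel-verified Lean document; each statement's English description precedes it below -/
import Mathlib

section
/- Define on the space of cubic matrices of order n over ℂ the ternary multiplication (X·Y·Z)_{ijk} = Σ_{p,r,s} X_{ijp} Y_{rsp} Z_{srk}. Then this ternary multiplication is associative of the second kind: for all cubic matrices X,Y,Z,U,V of order n, (X·Y·Z)·U·V = X·(U·Z·Y)·V = X·Y·(Z·U·V). -/
private theorem perm6aux {M : Type*} [AddCommMonoid M] {α : Type*} [Fintype α]
    (f : α → α → α → α → α → α → M) :
    ∑ x : α × α × α × α × α × α, f x.1 x.2.1 x.2.2.1 x.2.2.2.1 x.2.2.2.2.1 x.2.2.2.2.2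
      = ∑ a, ∑ b, ∑ c, ∑ d, ∑ e, ∑ g, f a b c d e g := by
  simp [Fintype.sum_prod_type]

private theorem perm6₁ {M : Type*} [AddCommMonoid M] {α : Type*} [Fintype α]
    (f : α → α → α → α → α → α → M) :
    ∑ a, ∑ b, ∑ c, ∑ d, ∑ e, ∑ g, f a b c d e g
      = ∑ a, ∑ b, ∑ c, ∑ d, ∑ e, ∑ g, f d b c a g e := by
  rw [← perm6aux f, ← perm6aux (fun a b c d e g => f d b c a g e)]
  exact Fintype.sum_equiv
    ⟨fun x => (x.2.2.2.1, x.2.1, x.2.2.1, x.1, x.2.2.2.2.2, x.2.2.2.2.1),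
     fun x => (x.2.2.2.1, x.2.1, x.2.2.1, x.1, x.2.2.2.2.2, x.2.2.2.2.1),
     fun _ => rfl, fun _ => rfl⟩ _ _ (fun _ => rfl)

private theorem perm6₂ {M : Type*} [AddCommMonoid M] {α : Type*} [Fintype α]
    (f : α → α → α → α → α → α → M) :
    ∑ a, ∑ b, ∑ c, ∑ d, ∑ e, ∑ g, f a b c d e g
      = ∑ a, ∑ b, ∑ c, ∑ d, ∑ e, ∑ g, f a e g d c b := by
  rw [← perm6aux f, ← perm6aux (fun a b c d e g => f a e g d c b)]
  exact Fintype.sum_equiv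
    ⟨fun x => (x.1, x.2.2.2.2.2, x.2.2.2.2.1, x.2.2.2.1, x.2.1, x.2.2.1),
     fun x => (x.1, x.2.2.2.2.1, x.2.2.2.2.2, x.2.2.2.1, x.2.2.1, x.2.1),
     fun _ => rfl, fun _ => rfl⟩ _ _ (fun _ => rfl)

/-- The ternary multiplication of cubic matrices of order `n`:
`(X·Y·Z)_{ijk} = Σ_{p,r,s} X_{ijp} Y_{rsp} Z_{srk}`. -/
noncomputable def cubicTernary {n : ℕ} (X Y Z : Fin n → Fin n → Fin n → ℂ) :
    Fin n → Fin n → Fin n → ℂ :=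
  fun i j k => ∑ p, ∑ r, ∑ s, X i j p * Y r s p * Z s r k

/-- The ternary multiplication of cubic matrices is associative of the second kind. -/
theorem cubicTernary_secondKindAssoc
    (n : ℕ) (X Y Z U V : Fin n → Fin n → Fin n → ℂ) :
    cubicTernary (cubicTernary X Y Z) U V = cubicTernary X (cubicTernary U Z Y) V
      ∧ cubicTernary X (cubicTernary U Z Y) V = cubicTernary X Y (cubicTernary Z U V) := by
  constructor
  · funext i j k
    simp only [cubicTernary, Finset.sum_mul, Finset.mul_sum]
    rw [perm6₁ (fun a b c d e g => X i j d * Y e g d * Z g e a * U b c a * V c b k)]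
    iterate 6 refine Finset.sum_congr rfl fun _ _ => ?_
    ring
  · funext i j k
    simp only [cubicTernary, Finset.sum_mul, Finset.mul_sum]
    rw [perm6₂ (fun a b c d e g => X i j a * (U b c d * Z e g d * Y g e a) * V c b k)]
    iterate 6 refine Finset.sum_congr rfl fun _ _ => ?_
    ring
end

section
/- Define on the space of cubic matrices of order n over ℂ the conjugate-linear ternary multiplication (X·Y·Z)_{ijk} = Σ_{p,r,s} X_{ijp} conj(Y_{rsp}) Z_{srk}, where conj denotes complex conjugation. Then this ternary multiplication is associative of the second kind: for all cubic matrices X,Y,Z,U,V of order n, (X·Y·Z)·U·V = X·(U·Z·Y)·V = X·Y·(Z·U·V). -/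
/-- The conjugate-linear ternary multiplication of cubic matrices of order `n`:
`(X·Y·Z)_{ijk} = Σ_{p,r,s} X_{ijp} conj(Y_{rsp}) Z_{srk}`. -/
noncomputable def cubicTernaryC {n : ℕ} (X Y Z : Fin n → Fin n → Fin n → ℂ) :
    Fin n → Fin n → Fin n → ℂ :=
  fun i j k => ∑ p, ∑ r, ∑ s, X i j p * (starRingEnd ℂ) (Y r s p) * Z s r k

/-- Auxiliary matrix `A(Y,Z)ₚₖ = Σ_{r,s} conj(Y_{rsp}) Z_{srk}`. -/
noncomputable def amat {n : ℕ} (Y Z : Fin n → Fin n → Fin n → ℂ) (p k : Fin n) : ℂ :=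
  ∑ r, ∑ s, (starRingEnd ℂ) (Y r s p) * Z s r k

lemma cubic_eq {n : ℕ} (X Y Z : Fin n → Fin n → Fin n → ℂ) (i j k : Fin n) :
    cubicTernaryC X Y Z i j k = ∑ p, X i j p * amat Y Z p k := by
  simp [cubicTernaryC, amat, Finset.mul_sum, mul_assoc]

lemma sum5_reindex {n : ℕ} (f : Fin n → Fin n → Fin n → Fin n → Fin n → ℂ)
    (σ : (Fin n × Fin n × Fin n × Fin n × Fin n) ≃ (Fin n × Fin n × Fin n × Fin n × Fin n)) :
    (∑ a, ∑ b, ∑ c, ∑ d, ∑ e, f a b c d e)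
      = ∑ a, ∑ b, ∑ c, ∑ d, ∑ e,
          f (σ (a,b,c,d,e)).1 (σ (a,b,c,d,e)).2.1 (σ (a,b,c,d,e)).2.2.1
            (σ (a,b,c,d,e)).2.2.2.1 (σ (a,b,c,d,e)).2.2.2.2 := by
  rw [show (∑ a, ∑ b, ∑ c, ∑ d, ∑ e, f a b c d e)
      = ∑ t : Fin n × Fin n × Fin n × Fin n × Fin n,
          f t.1 t.2.1 t.2.2.1 t.2.2.2.1 t.2.2.2.2 by
    simp [Fintype.sum_prod_type]]
  rw [show (∑ a, ∑ b, ∑ c, ∑ d, ∑ e,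
          f (σ (a,b,c,d,e)).1 (σ (a,b,c,d,e)).2.1 (σ (a,b,c,d,e)).2.2.1
            (σ (a,b,c,d,e)).2.2.2.1 (σ (a,b,c,d,e)).2.2.2.2)
      = ∑ t : Fin n × Fin n × Fin n × Fin n × Fin n,
          f (σ t).1 (σ t).2.1 (σ t).2.2.1 (σ t).2.2.2.1 (σ t).2.2.2.2 by
    simp [Fintype.sum_prod_type]]
  exact (Fintype.sum_equiv σ _ _ (fun x => rfl)).symm

lemma amat_right {n : ℕ} (Y Z U V : Fin n → Fin n → Fin n → ℂ) (p k : Fin n) :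
    amat Y (cubicTernaryC Z U V) p k = ∑ q, amat Y Z p q * amat U V q k := by
  simp only [amat, cubicTernaryC, map_sum, map_mul, Complex.conj_conj,
    Finset.mul_sum, Finset.sum_mul]
  rw [sum5_reindex (fun a b c d e => (starRingEnd ℂ) (Y a b p) *
      (Z b a c * (starRingEnd ℂ) (U d e c) * V e d k))
    ⟨fun t => (t.2.2.2.1, t.2.2.2.2, t.1, t.2.1, t.2.2.1),
     fun t => (t.2.2.1, t.2.2.2.1, t.2.2.2.2, t.1, t.2.1),
     by rintro ⟨a,b,c,d,e⟩; rfl, by rintro ⟨a,b,c,d,e⟩; rfl⟩]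
  refine Finset.sum_congr rfl fun a _ => Finset.sum_congr rfl fun b _ =>
    Finset.sum_congr rfl fun c _ => Finset.sum_congr rfl fun d _ =>
    Finset.sum_congr rfl fun e _ => ?_
  simp only [Equiv.coe_fn_mk]
  ring

lemma amat_left {n : ℕ} (Y Z U V : Fin n → Fin n → Fin n → ℂ) (p k : Fin n) :
    amat (cubicTernaryC U Z Y) V p k = ∑ q, amat Y Z p q * amat U V q k := by
  simp only [amat, cubicTernaryC, map_sum, map_mul, Complex.conj_conj,
    Finset.mul_sum, Finset.sum_mul]
  rw [sum5_reindex (fun a b c d e => (starRingEnd ℂ) (U a b c) * Z d e c *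
      (starRingEnd ℂ) (Y e d p) * V b a k)
    ⟨fun t => (t.2.1, t.2.2.1, t.1, t.2.2.2.2, t.2.2.2.1),
     fun t => (t.2.2.1, t.1, t.2.1, t.2.2.2.2, t.2.2.2.1),
     by rintro ⟨a,b,c,d,e⟩; rfl, by rintro ⟨a,b,c,d,e⟩; rfl⟩]
  refine Finset.sum_congr rfl fun a _ => Finset.sum_congr rfl fun b _ =>
    Finset.sum_congr rfl fun c _ => Finset.sum_congr rfl fun d _ =>
    Finset.sum_congr rfl fun e _ => ?_
  simp only [Equiv.coe_fn_mk]
  ring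

/-- The conjugate-linear ternary multiplication of cubic matrices is associative of the
second kind. -/
theorem cubicTernaryC_secondKindAssoc
    (n : ℕ) (X Y Z U V : Fin n → Fin n → Fin n → ℂ) :
    cubicTernaryC (cubicTernaryC X Y Z) U V = cubicTernaryC X (cubicTernaryC U Z Y) V
      ∧ cubicTernaryC X (cubicTernaryC U Z Y) V = cubicTernaryC X Y (cubicTernaryC Z U V) := by
  have hB : cubicTernaryC X (cubicTernaryC U Z Y) V
      = fun i j k => ∑ p, ∑ q, X i j p * amat Y Z p q * amat U V q k := by
    funext i j k
    simp only [cubic_eq, amat_left, Finset.mul_sum, mul_assoc]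
  constructor
  · rw [hB]
    funext i j k
    simp only [cubic_eq, Finset.sum_mul]
    rw [Finset.sum_comm]
  · rw [hB]
    funext i j k
    simp only [cubic_eq, amat_right, Finset.mul_sum, mul_assoc]
end

section
/- For cubic matrices of order n over ℂ, write a cubic matrix X as the matrix vector (X_{(1)},…,X_{(n)}) of its n square slices X_{(k)} = (X_{ijk})_{i,j} obtained by fixing the third index, and define: the right action (X ▷ A)_{ijk} = Σ_p X_{ijp} A_{pk} of a complex n × n matrix A on X, and the n × n matrix β(Y,Z) with entries β(Y,Z)_{pk} = tr(Y_{(p)} Z_{(k)}). Then for all cubic matrices X,Y,Z,V of order n: (i) β(X, Y ▷ β(Z,V)) = β(X,Y) β(Z,V), and (ii) β(X ▷ β(Z,V), Y) = β(V,Z) β(X,Y), where juxtaposition on the right-hand sides is matrix multiplication. -/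
open Matrix

/-- The `k`-th square cslice of a cubic matrix `X`, obtained by fixing the third index. -/
def cslice {n : ℕ} (X : Fin n → Fin n → Fin n → ℂ) (k : Fin n) :
    Matrix (Fin n) (Fin n) ℂ :=
  fun i j => X i j k

/-- The right action `(X ▷ A)_{ijk} = Σ_p X_{ijp} A_{pk}` of a square matrix on a cubic matrix. -/
noncomputable def ract {n : ℕ} (X : Fin n → Fin n → Fin n → ℂ)
    (A : Matrix (Fin n) (Fin n) ℂ) : Fin n → Fin n → Fin n → ℂ :=
  fun i j k => ∑ p, X i j p * A p k

/-- The matrix-valued bilinear form `β(Y,Z)_{pk} = tr(Y_{(p)} Z_{(k)})` on cubic matrices. -/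
noncomputable def cbeta {n : ℕ} (Y Z : Fin n → Fin n → Fin n → ℂ) :
    Matrix (Fin n) (Fin n) ℂ :=
  fun p k => Matrix.trace (cslice Y p * cslice Z k)


lemma swap3 {n : ℕ} (f : Fin n → Fin n → Fin n → ℂ) :
    ∑ i, ∑ j, ∑ q, f i j q = ∑ q, ∑ i, ∑ j, f i j q := by
  calc ∑ i, ∑ j, ∑ q, f i j q = ∑ i, ∑ q, ∑ j, f i j q :=
        Finset.sum_congr rfl fun i _ => Finset.sum_comm
    _ = ∑ q, ∑ i, ∑ j, f i j q := Finset.sum_comm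

lemma aux1 {n : ℕ} (X Y : Fin n → Fin n → Fin n → ℂ) (B : Matrix (Fin n) (Fin n) ℂ) :
    cbeta X (ract Y B) = cbeta X Y * B := by
  ext p k
  simp only [cbeta, cslice, ract, Matrix.trace, Matrix.diag, Matrix.mul_apply,
    Finset.mul_sum, Finset.sum_mul]
  rw [swap3 (fun i j q => X i j p * (Y j i q * B q k))]
  exact Finset.sum_congr rfl fun q _ => Finset.sum_congr rfl fun i _ =>
    Finset.sum_congr rfl fun j _ => by ring

lemma aux2 {n : ℕ} (X Y : Fin n → Fin n → Fin n → ℂ) (B : Matrix (Fin n) (Fin n) ℂ) :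
    cbeta (ract X B) Y = Bᵀ * cbeta X Y := by
  ext p k
  simp only [cbeta, cslice, ract, Matrix.trace, Matrix.diag, Matrix.mul_apply,
    Matrix.transpose_apply, Finset.mul_sum, Finset.sum_mul]
  rw [swap3 (fun i j q => X i j q * B q p * Y j i k)]
  exact Finset.sum_congr rfl fun q _ => Finset.sum_congr rfl fun i _ =>
    Finset.sum_congr rfl fun j _ => by ring

lemma aux3 {n : ℕ} (Z V : Fin n → Fin n → Fin n → ℂ) :
    cbeta V Z = (cbeta Z V)ᵀ := by
  ext p k
  exact Matrix.trace_mul_comm _ _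

/-- The bilinear form `β` satisfies `β(X, Y ▷ β(Z,V)) = β(X,Y) β(Z,V)` and
`β(X ▷ β(Z,V), Y) = β(V,Z) β(X,Y)`. -/
theorem cbeta_secondKind_conditions
    (n : ℕ) (X Y Z V : Fin n → Fin n → Fin n → ℂ) :
    cbeta X (ract Y (cbeta Z V)) = cbeta X Y * cbeta Z V
      ∧ cbeta (ract X (cbeta Z V)) Y = cbeta V Z * cbeta X Y := by
  exact ⟨aux1 X Y _, by rw [aux2, ← aux3]⟩
end
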